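/- Fix an integer N ≥ 1, a real ρ > 0, and strictly increasing real N-tuples 𝐦 = (m₀ < ⋯ < m_{N−1}) and 𝐧 = (n₀ < ⋯ < n_{N−1}) with m_j ≤ n_j for all j. Then for every u ∈ (0, √ρ]^N with pairwise distinct entries, det(u^{∘𝐧})/det(u^{∘𝐦}) ≤ ρ^{(|𝐧| − |𝐦|)/2} · V(𝐧)/V(𝐦), where |𝐧| := n₀ + ⋯ + n_{N−1} and |𝐦| := m₀ + ⋯ + m_{N−1}. -/

import Mathlib

open Matrix BigOperators

/-- The Vandermonde-type product V(m) = ∏_{k<l} (m_l - m_k). -/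
noncomputable def Vdm (N : ℕ) (m : Fin N → ℝ) : ℝ :=
  ∏ p ∈ Finset.univ.filter (fun p : Fin N × Fin N => p.1 < p.2), (m p.2 - m p.1)

/-!
For increasing `u` in `(0, 1]` the normalized determinant `det (u ^ a) / V(a)` is antitone in the
exponent tuple `a`, which is the theorem after sorting `u` and rescaling it by `√ρ`.
Subtracting consecutive rows of `u ^ (a - a₀)` and writing each difference `u_{i+1}^e - u_i^e` as
`e ∫ x^(e-1)` over `[u_i, u_{i+1}]` gives
`det (u ^ a) / V(a) = ∫ (∏ uᵢ)^a₀ (∏ tᵢ)^(-(a₀+1)) · det (t ^ a') / V(a')`,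
over the box of `t` interlacing `u`, where `a' = (a₁, …, a_N)`. Since `∏ uᵢ ≤ ∏ tᵢ` the kernel
decreases in `a₀`, and the last factor decreases in `a'` by induction. The same formula shows
by induction that the determinants are positive.
-/

open Finset MeasureTheory

theorem Vdm_eq_prod_prod_Ioi (N : ℕ) (m : Fin N → ℝ) :
    Vdm N m = ∏ i, ∏ j ∈ Ioi i, (m j - m i) := by
  rw [Vdm, prod_sigma']
  exact prod_nbij' (fun p => ⟨p.1, p.2⟩) (fun p => (p.1, p.2))
    (by simp) (by simp) (by simp) (by simp) (by simp)

theorem Vdm_pos {N : ℕ} {m : Fin N → ℝ} (hm : StrictMono m) : 0 < Vdm N m := by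
  rw [Vdm_eq_prod_prod_Ioi]
  exact prod_pos fun i _ => prod_pos fun j hj => sub_pos.2 (hm (mem_Ioi.1 hj))

theorem Vdm_succ (N : ℕ) (m : Fin (N + 1) → ℝ) :
    Vdm (N + 1) m = (∏ j : Fin N, (m j.succ - m 0)) * Vdm N (fun j => m j.succ) := by
  simp_rw [Vdm_eq_prod_prod_Ioi, Fin.prod_univ_succ, Fin.prod_Ioi_zero, Fin.prod_Ioi_succ]

theorem rpow_sub_rpow_eq_mul_integral {x y e : ℝ} (hxy : x ≤ y) (he : 0 < e) :
    y ^ e - x ^ e = e * ∫ t in Set.Icc x y, t ^ (e - 1) := by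
  rw [integral_Icc_eq_integral_Ioc, ← intervalIntegral.integral_of_le hxy,
    integral_rpow (Or.inl (by linarith)), sub_add_cancel, mul_div_cancel₀ _ he.ne']

theorem integrableOn_Icc_rpow_sub_one {x y e : ℝ} (hxy : x ≤ y) (he : 0 < e) :
    IntegrableOn (fun t => t ^ (e - 1)) (Set.Icc x y) :=
  (intervalIntegrable_iff_integrableOn_Icc_of_le hxy).1
    (intervalIntegral.intervalIntegrable_rpow' (by linarith))

theorem rpow_mul_rpow_neg_add_one_le {P Q s s' : ℝ} (hP : 0 < P) (hPQ : P ≤ Q) (hs : s ≤ s') :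
    P ^ s' * Q ^ (-(s' + 1)) ≤ P ^ s * Q ^ (-(s + 1)) := by
  have hQ := hP.trans_le hPQ
  have h (r : ℝ) : P ^ r * Q ^ (-(r + 1)) = (P / Q) ^ r / Q := by
    rw [Real.div_rpow hP.le hQ.le, neg_add, Real.rpow_add hQ, Real.rpow_neg hQ.le,
      Real.rpow_neg_one]
    field_simp
  rw [h, h]
  exact div_le_div_of_nonneg_right
    (Real.rpow_le_rpow_of_exponent_ge (div_pos hP hQ) ((div_le_one hQ).2 hPQ) hs) hQ.le

theorem setIntegral_pi_Icc_pos {ι : Type*} [Fintype ι] {c d : ι → ℝ} (hcd : ∀ i, c i < d i)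
    {f : (ι → ℝ) → ℝ} (hf : IntegrableOn f (Set.univ.pi fun i => Set.Icc (c i) (d i)))
    (hf0 : ∀ t ∈ Set.univ.pi fun i => Set.Icc (c i) (d i), 0 ≤ f t)
    (hfpos : ∀ t ∈ Set.univ.pi fun i => Set.Ioo (c i) (d i), 0 < f t) :
    0 < ∫ t in Set.univ.pi fun i => Set.Icc (c i) (d i), f t := by
  have hbox : MeasurableSet (Set.univ.pi fun i => Set.Icc (c i) (d i)) :=
    .univ_pi fun _ => measurableSet_Icc
  rw [setIntegral_pos_iff_support_of_nonneg_ae ((ae_restrict_iff' hbox).2 (ae_of_all _ hf0)) hf]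
  have hsub : (Set.univ.pi fun i => Set.Ioo (c i) (d i)) ⊆
      Function.support f ∩ Set.univ.pi fun i => Set.Icc (c i) (d i) := fun t ht =>
    ⟨(hfpos t ht).ne', fun i _ => Set.Ioo_subset_Icc_self (ht i trivial)⟩
  refine lt_of_lt_of_le ?_ (measure_mono hsub)
  simp [volume_pi_pi, Real.volume_Ioo, hcd]

section Determinant

variable {ι : Type*} [Fintype ι] [DecidableEq ι]

theorem det_eq_zero_of_not_injective {α R : Type*} [CommRing R] (g : α → ι → R) {t : ι → α}
    (ht : ¬ Function.Injective t) : det (of fun i j => g (t i) j) = 0 := by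
  obtain ⟨i, j, hij, hne⟩ := Function.not_injective_iff.1 ht
  exact det_zero_of_row_eq hne (funext fun k => by simp [hij])

theorem det_integral_eq_integral_det {α : Type*} [MeasurableSpace α] {μ : ι → Measure α}
    [∀ i, SigmaFinite (μ i)] (f : α → ι → ℝ) (hf : ∀ i j, Integrable (fun x => f x j) (μ i)) :
    det (of fun i j => ∫ x, f x j ∂μ i) = ∫ t, det (of fun i j => f (t i) j) ∂Measure.pi μ := by
  -- in this expansion each term is a product of functions of the separate coordinates `t i`
  have det_eq (M : Matrix ι ι ℝ) :
      det M = ∑ σ : Equiv.Perm ι, Equiv.Perm.sign σ * ∏ i, M i (σ i) := by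
    rw [← det_transpose, det_apply']; rfl
  simp only [det_eq, of_apply]
  rw [integral_finsetSum _ fun σ _ => (Integrable.fintype_prod fun i => hf i (σ i)).const_mul _]
  refine sum_congr rfl fun σ _ => ?_
  rw [integral_const_mul, integral_fintype_prod_eq_prod (fun i x => f x (σ i))]

theorem det_rpow_add_const {u : ι → ℝ} (hu : ∀ i, 0 < u i) (a : ι → ℝ) (s : ℝ) :
    det (of fun i j => u i ^ (a j + s)) = (∏ i, u i) ^ s * det (of fun i j => u i ^ a j) := by
  rw [← Real.finsetProd_rpow _ _ fun i _ => (hu i).le, ← det_mul_column]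
  simp only [of_apply, Real.rpow_add (hu _), mul_comm]

theorem det_const_mul_rpow {c : ℝ} (hc : 0 < c) {u : ι → ℝ} (hu : ∀ i, 0 ≤ u i) (a : ι → ℝ) :
    det (of fun i j => (c * u i) ^ a j) = c ^ (∑ j, a j) * det (of fun i j => u i ^ a j) := by
  rw [Real.rpow_sum_of_pos hc, ← det_mul_row]
  simp only [of_apply, Real.mul_rpow hc.le (hu _)]

theorem det_const_mul_rpow_div {c : ℝ} (hc : 0 < c) {u : ι → ℝ} (hu : ∀ i, 0 ≤ u i)
    (m n : ι → ℝ) :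
    det (of fun i j => (c * u i) ^ n j) / det (of fun i j => (c * u i) ^ m j) =
      c ^ (∑ j, n j - ∑ j, m j) *
        (det (of fun i j => u i ^ n j) / det (of fun i j => u i ^ m j)) := by
  rw [det_const_mul_rpow hc hu, det_const_mul_rpow hc hu, mul_div_mul_comm, Real.rpow_sub hc]

theorem det_rpow_div_comp_perm (u : ι → ℝ) (σ : Equiv.Perm ι) (m n : ι → ℝ) :
    det (of fun i j => u (σ i) ^ n j) / det (of fun i j => u (σ i) ^ m j) =
      det (of fun i j => u i ^ n j) / det (of fun i j => u i ^ m j) := by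
  have h (e : ι → ℝ) : det (of fun i j => u (σ i) ^ e j) =
      Equiv.Perm.sign σ * det (of fun i j => u i ^ e j) :=
    det_permute σ (of fun i j => u i ^ e j)
  rw [h, h, mul_div_mul_left _ _ (by simp)]

theorem continuousOn_det_rpow (e : ι → ℝ) :
    ContinuousOn (fun t : ι → ℝ => det (of fun i j => t i ^ e j)) {t | ∀ i, 0 < t i} := by
  refine (continuous_id.matrix_det).comp_continuousOn
    (continuousOn_pi.2 fun i => continuousOn_pi.2 fun j => ?_)
  exact (continuous_apply i).continuousOn.rpow_const fun t ht => Or.inl (ht i).ne'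

end Determinant

theorem det_eq_det_of_sub_pred_rows {R : Type*} [CommRing R] {N : ℕ}
    (B : Matrix (Fin (N + 1)) (Fin (N + 1)) R) (hB : ∀ i, B i 0 = 1) :
    det B = det (of fun i j : Fin N => B i.succ j.succ - B i.castSucc j.succ) := by
  let B' : Matrix (Fin (N + 1)) (Fin (N + 1)) R :=
    of fun i j => Fin.cases (B 0 j) (fun i => B i.succ j - B i.castSucc j) i
  have hB' : det B = det B' :=
    det_eq_of_forall_row_eq_smul_add_pred (fun _ => 1) (fun _ => rfl) fun i j => by simp [B']
  rw [hB', det_succ_column_zero, Fin.sum_univ_succ]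
  simp only [B', of_apply, Fin.cases_zero, Fin.cases_succ, hB, sub_self, mul_zero, zero_mul,
    sum_const_zero, add_zero, Fin.val_zero, pow_zero, one_mul, Fin.succAbove_zero]
  rfl

def interlacingBox {N : ℕ} (u : Fin (N + 1) → ℝ) : Set (Fin N → ℝ) :=
  Set.univ.pi fun i => Set.Icc (u i.castSucc) (u i.succ)

section interlacingBox

variable {N : ℕ} {u : Fin (N + 1) → ℝ} {t : Fin N → ℝ}

theorem measurableSet_interlacingBox : MeasurableSet (interlacingBox u) :=
  .univ_pi fun _ => measurableSet_Icc

theorem isCompact_interlacingBox : IsCompact (interlacingBox u) :=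
  isCompact_univ_pi fun _ => isCompact_Icc

theorem setIntegral_interlacingBox (F : (Fin N → ℝ) → ℝ) :
    ∫ t in interlacingBox u, F t =
      ∫ t, F t ∂Measure.pi fun i => volume.restrict (Set.Icc (u i.castSucc) (u i.succ)) := by
  rw [interlacingBox, volume_pi, Measure.restrict_pi_pi]

theorem monotone_of_mem_interlacingBox (hu : Monotone u) (ht : t ∈ interlacingBox u) :
    Monotone t := fun i j hij => hij.eq_or_lt.elim (fun h => h ▸ le_rfl) fun h =>
  (ht i trivial).2.trans ((hu (Fin.succ_le_castSucc_iff.2 h)).trans (ht j trivial).1)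

theorem strictMono_of_mem_pi_Ioo (hu : Monotone u)
    (ht : t ∈ Set.univ.pi fun i => Set.Ioo (u i.castSucc) (u i.succ)) : StrictMono t :=
  fun i j h =>
    (ht i trivial).2.trans ((hu (Fin.succ_le_castSucc_iff.2 h)).trans_lt (ht j trivial).1)

theorem pos_of_mem_interlacingBox (hu : Monotone u) (hu0 : 0 < u 0) (ht : t ∈ interlacingBox u)
    (i : Fin N) : 0 < t i :=
  hu0.trans_le ((hu (Fin.zero_le _)).trans (ht i trivial).1)

theorem prod_le_prod_of_mem_interlacingBox (hu0 : ∀ i, 0 < u i) (hu1 : u (Fin.last N) ≤ 1)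
    (ht : t ∈ interlacingBox u) : ∏ i, u i ≤ ∏ i, t i := by
  have ht0 i : 0 < t i := (hu0 _).trans_le (ht i trivial).1
  calc ∏ i, u i = (∏ i : Fin N, u i.castSucc) * u (Fin.last N) := Fin.prod_univ_castSucc u
    _ ≤ (∏ i, t i) * 1 :=
      mul_le_mul (prod_le_prod (fun i _ => (hu0 _).le) fun i _ => (ht i trivial).1) hu1
        (hu0 _).le (prod_nonneg fun i _ => (ht0 i).le)
    _ = ∏ i, t i := mul_one _

end interlacingBox

theorem det_rpow_eq_integral {N : ℕ} {u a : Fin (N + 1) → ℝ} (hu : Monotone u) (hu0 : 0 < u 0)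
    (ha : ∀ j : Fin N, a 0 < a j.succ) :
    det (of fun i j => u i ^ a j) = (∏ i, u i) ^ a 0 * ((∏ j : Fin N, (a j.succ - a 0)) *
      ∫ t in interlacingBox u, det (of fun i j => t i ^ (a j.succ - a 0 - 1))) := by
  have hpos i : 0 < u i := hu0.trans_le (hu (Fin.zero_le i))
  have hint (i j : Fin N) : Integrable (fun x => x ^ (a j.succ - a 0 - 1))
      (volume.restrict (Set.Icc (u i.castSucc) (u i.succ))) :=
    integrableOn_Icc_rpow_sub_one (hu Fin.castSucc_lt_succ.le) (sub_pos.2 (ha j))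
  calc det (of fun i j => u i ^ a j)
      = (∏ i, u i) ^ a 0 * det (of fun i j => u i ^ (a j - a 0)) := by
        rw [← det_rpow_add_const hpos]; simp_rw [sub_add_cancel]
    _ = (∏ i, u i) ^ a 0 * det (of fun i j : Fin N => (a j.succ - a 0) *
          ∫ x in Set.Icc (u i.castSucc) (u i.succ), x ^ (a j.succ - a 0 - 1)) := by
        rw [det_eq_det_of_sub_pred_rows _ fun i => by simp]
        congr; ext i j
        exact rpow_sub_rpow_eq_mul_integral (hu Fin.castSucc_lt_succ.le) (sub_pos.2 (ha j))
    _ = _ := by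
        rw [setIntegral_interlacingBox, ← det_integral_eq_integral_det _ hint, ← det_mul_row]
        rfl

theorem det_rpow_pos {N : ℕ} {u a : Fin N → ℝ} (hu : StrictMono u) (hu0 : ∀ i, 0 < u i)
    (ha : StrictMono a) : 0 < det (of fun i j => u i ^ a j) := by
  induction N with
  | zero => simp
  | succ N ih =>
    rw [det_rpow_eq_integral hu.monotone (hu0 0) fun j => ha (Fin.succ_pos j)]
    have ha' : StrictMono fun j : Fin N => a j.succ - a 0 - 1 := fun i j hij => by
      simpa using ha (Fin.succ_lt_succ_iff.2 hij)
    have htpos {t} (ht : t ∈ interlacingBox u) := pos_of_mem_interlacingBox hu.monotone (hu0 0) ht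
    refine mul_pos (Real.rpow_pos_of_pos (prod_pos fun i _ => hu0 i) _)
      (mul_pos (prod_pos fun j _ => sub_pos.2 (ha (Fin.succ_pos j))) ?_)
    refine setIntegral_pi_Icc_pos (fun i => hu Fin.castSucc_lt_succ)
      (((continuousOn_det_rpow _).mono fun t ht => htpos ht).integrableOn_compact
        isCompact_interlacingBox) (fun t ht => ?_)
      fun t ht => ih (strictMono_of_mem_pi_Ioo hu.monotone ht)
        (htpos fun i _ => Set.Ioo_subset_Icc_self (ht i trivial)) ha'
    by_cases hinj : Function.Injective t
    · exact (ih ((monotone_of_mem_interlacingBox hu.monotone ht).strictMono_of_injective hinj)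
        (htpos ht) ha').le
    · exact (det_eq_zero_of_not_injective (fun x j => x ^ (a j.succ - a 0 - 1)) hinj).ge

theorem det_rpow_nonneg {N : ℕ} {u a : Fin N → ℝ} (hu : Monotone u) (hu0 : ∀ i, 0 < u i)
    (ha : StrictMono a) : 0 ≤ det (of fun i j => u i ^ a j) := by
  by_cases hinj : Function.Injective u
  · exact (det_rpow_pos (hu.strictMono_of_injective hinj) hu0 ha).le
  · exact (det_eq_zero_of_not_injective (fun x j => x ^ a j) hinj).ge

noncomputable def genVdmRatio {N : ℕ} (u a : Fin N → ℝ) : ℝ :=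
  det (of fun i j => u i ^ a j) / Vdm N a

theorem genVdmRatio_nonneg {N : ℕ} {u a : Fin N → ℝ} (hu : Monotone u) (hu0 : ∀ i, 0 < u i)
    (ha : StrictMono a) : 0 ≤ genVdmRatio u a :=
  div_nonneg (det_rpow_nonneg hu hu0 ha) (Vdm_pos ha).le

theorem genVdmRatio_eq_integral {N : ℕ} {u a : Fin (N + 1) → ℝ} (hu : Monotone u)
    (hu0 : 0 < u 0) (ha : StrictMono a) :
    genVdmRatio u a = ∫ t in interlacingBox u,
      (∏ i, u i) ^ a 0 * (∏ i, t i) ^ (-(a 0 + 1)) * genVdmRatio t fun j => a j.succ := by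
  have hV : 0 < Vdm N fun j => a j.succ := Vdm_pos (ha.comp (Fin.strictMono_succ))
  have hP : 0 < ∏ j : Fin N, (a j.succ - a 0) := prod_pos fun j _ => sub_pos.2 (ha j.succ_pos)
  have hdet : ∀ t ∈ interlacingBox u, det (of fun i j => t i ^ (a j.succ - a 0 - 1)) =
      (∏ i, t i) ^ (-(a 0 + 1)) * det (of fun i j => t i ^ a j.succ) := fun t ht => by
    rw [← det_rpow_add_const (pos_of_mem_interlacingBox hu hu0 ht)]
    simp only [sub_sub, ← sub_eq_add_neg]
  rw [genVdmRatio, det_rpow_eq_integral hu hu0 fun j => ha j.succ_pos, Vdm_succ,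
    setIntegral_congr_fun measurableSet_interlacingBox hdet]
  calc _ = (∏ i, u i) ^ a 0 / Vdm N (fun j => a j.succ) * ∫ t in interlacingBox u,
          (∏ i, t i) ^ (-(a 0 + 1)) * det (of fun i j => t i ^ a j.succ) := by
        field_simp
    _ = _ := by
        rw [← integral_const_mul]
        congr 1; ext t
        rw [genVdmRatio]; ring

theorem genVdmRatio_le_of_le {N : ℕ} {u a b : Fin N → ℝ} (hu : Monotone u)
    (hu0 : ∀ i, 0 < u i) (hu1 : ∀ i, u i ≤ 1) (ha : StrictMono a) (hb : StrictMono b)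
    (hab : a ≤ b) : genVdmRatio u b ≤ genVdmRatio u a := by
  induction N with
  | zero => simp [genVdmRatio, Vdm]
  | succ N ih =>
    have htpos {t} (ht : t ∈ interlacingBox u) := pos_of_mem_interlacingBox hu (hu0 0) ht
    have hint (c : Fin (N + 1) → ℝ) : IntegrableOn (fun t => (∏ i, u i) ^ c 0 *
        (∏ i, t i) ^ (-(c 0 + 1)) * genVdmRatio t fun j => c j.succ) (interlacingBox u) := by
      have hprod : ContinuousOn (fun t : Fin N → ℝ => (∏ i, t i) ^ (-(c 0 + 1)))
          {t | ∀ i, 0 < t i} :=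
        (continuous_finsetProd _ fun i _ => continuous_apply i).continuousOn.rpow_const
          fun t ht => Or.inl (prod_pos fun i _ => ht i).ne'
      refine ContinuousOn.integrableOn_compact isCompact_interlacingBox
        (ContinuousOn.mono ?_ fun t ht => htpos ht)
      exact (continuousOn_const.mul hprod).mul ((continuousOn_det_rpow _).div_const _)
    rw [genVdmRatio_eq_integral hu (hu0 0) ha, genVdmRatio_eq_integral hu (hu0 0) hb]
    refine setIntegral_mono_on (hint b) (hint a) measurableSet_interlacingBox fun t ht => ?_
    have htmono := monotone_of_mem_interlacingBox hu ht
    refine mul_le_mul ?_ (ih htmono (htpos ht) (fun i => (ht i trivial).2.trans (hu1 _))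
        (ha.comp Fin.strictMono_succ) (hb.comp Fin.strictMono_succ) fun j => hab j.succ)
      (genVdmRatio_nonneg htmono (htpos ht) (hb.comp Fin.strictMono_succ)) ?_
    · exact rpow_mul_rpow_neg_add_one_le (prod_pos fun i _ => hu0 i)
        (prod_le_prod_of_mem_interlacingBox hu0 (hu1 _) ht) (hab 0)
    · exact mul_nonneg (Real.rpow_nonneg (prod_pos fun i _ => hu0 i).le _)
        (Real.rpow_nonneg (prod_pos fun i _ => htpos ht i).le _)

theorem det_rpow_div_le_Vdm_div {N : ℕ} {w m n : Fin N → ℝ} (hw : StrictMono w)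
    (hw0 : ∀ i, 0 < w i) (hw1 : ∀ i, w i ≤ 1) (hm : StrictMono m) (hn : StrictMono n)
    (hle : m ≤ n) :
    det (of fun i j => w i ^ n j) / det (of fun i j => w i ^ m j) ≤ Vdm N n / Vdm N m := by
  have h := genVdmRatio_le_of_le hw.monotone hw0 hw1 hm hn hle
  rw [genVdmRatio, genVdmRatio, div_le_div_iff₀ (Vdm_pos hn) (Vdm_pos hm)] at h
  rw [div_le_div_iff₀ (det_rpow_pos hw hw0 hm) (Vdm_pos hm)]
  linarith

theorem stmt11_general (N : ℕ) (ρ : ℝ) (hρ : 0 < ρ) (m n : Fin N → ℝ)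
    (hm : StrictMono m) (hn : StrictMono n) (hle : ∀ j, m j ≤ n j)
    (u : Fin N → ℝ) (hu : ∀ i, 0 < u i ∧ u i ≤ Real.sqrt ρ)
    (huinj : Function.Injective u) :
    Matrix.det (Matrix.of fun i j => u i ^ n j) /
        Matrix.det (Matrix.of fun i j => u i ^ m j) ≤
      ρ ^ (((∑ j, n j) - ∑ j, m j) / 2) * Vdm N n / Vdm N m := by
  set σ := Tuple.sort u
  have hs : 0 < √ρ := Real.sqrt_pos.2 hρ
  set w : Fin N → ℝ := fun i => u (σ i) / √ρ
  have hw : StrictMono w := fun i j h => div_lt_div_of_pos_right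
    ((Tuple.monotone_sort u).strictMono_of_injective (huinj.comp σ.injective) h) hs
  have huw i : u (σ i) = √ρ * w i := (mul_div_cancel₀ _ hs.ne').symm
  calc _ = det (of fun i j => u (σ i) ^ n j) / det (of fun i j => u (σ i) ^ m j) :=
        (det_rpow_div_comp_perm u σ m n).symm
    _ = √ρ ^ (∑ j, n j - ∑ j, m j) *
          (det (of fun i j => w i ^ n j) / det (of fun i j => w i ^ m j)) := by
        simp only [huw]
        rw [det_const_mul_rpow_div hs fun i => (div_pos (hu _).1 hs).le]
    _ ≤ √ρ ^ (∑ j, n j - ∑ j, m j) * (Vdm N n / Vdm N m) :=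
        mul_le_mul_of_nonneg_left (det_rpow_div_le_Vdm_div hw (fun i => div_pos (hu _).1 hs)
          (fun i => (div_le_one hs).2 (hu _).2) hm hn hle) (by positivity)
    _ = _ := by
        rw [Real.sqrt_eq_rpow, ← Real.rpow_mul hρ.le, mul_div_assoc]
        ring_nf

theorem stmt11 (N : ℕ) (hN : 1 ≤ N) (ρ : ℝ) (hρ : 0 < ρ) (m n : Fin N → ℝ)
    (hm : StrictMono m) (hn : StrictMono n) (hle : ∀ j, m j ≤ n j)
    (u : Fin N → ℝ) (hu : ∀ i, 0 < u i ∧ u i ≤ Real.sqrt ρ)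
    (huinj : Function.Injective u) :
    Matrix.det (Matrix.of fun i j => u i ^ n j) /
        Matrix.det (Matrix.of fun i j => u i ^ m j) ≤
      ρ ^ (((∑ j, n j) - ∑ j, m j) / 2) * Vdm N n / Vdm N m :=
  stmt11_general N ρ hρ m n hm hn hle u hu huinj
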